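/- Let H be a finite-dimensional Hopf algebra, and let the twisted Drinfeld double D(H)_α carry crossing maps φ_α(p ⊗ a) = p∘α⁻¹ ⊗ α(a). Then each φ_α : D(H)_β → D(H)_{αβα⁻¹} is an algebra isomorphism, and φ_α ∘ φ_β = φ_{αβ} for all α, β ∈ Aut(H). -/

import Mathlib

/-!
Statement 9: the crossing maps `φ_α(p ⊗ a) = p∘α⁻¹ ⊗ α(a)` of the twisted Drinfeld double
are algebra isomorphisms `D(H)_β → D(H)_{αβα⁻¹}`, and `φ_α ∘ φ_β = φ_{αβ}`.
-/

open TensorProduct HopfAlgebra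

section Defs

variable {k H : Type*} [CommRing k] [Ring H] [HopfAlgebra k H]

/-- convolution product on the dual. -/
noncomputable def dualMul (p q : H →ₗ[k] k) : H →ₗ[k] k :=
  (LinearMap.mul' k k) ∘ₗ (TensorProduct.map p q) ∘ₗ (Coalgebra.comul (R := k))

/-- `q(x · h · y)` as a functional of `h`. -/
noncomputable def sandwich (x y : H) (q : H →ₗ[k] k) : H →ₗ[k] k :=
  q ∘ₗ (LinearMap.mulRight k y) ∘ₗ (LinearMap.mulLeft k x)

/-- iterated comultiplication `a ↦ (a₍₁₎ ⊗ a₍₂₎) ⊗ a₍₃₎`. -/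
noncomputable def comul2 : H →ₗ[k] (H ⊗[k] H) ⊗[k] H :=
  (LinearMap.rTensor H (Coalgebra.comul (R := k))) ∘ₗ (Coalgebra.comul (R := k))

/-- A linear endomorphism of `H` is a Hopf algebra automorphism. -/
def IsHopfAut (f : H →ₗ[k] H) : Prop :=
  Function.Bijective f ∧ (∀ x y : H, f (x * y) = f x * f y) ∧ f 1 = 1 ∧
    (Coalgebra.comul (R := k)) ∘ₗ f = (TensorProduct.map f f) ∘ₗ (Coalgebra.comul (R := k)) ∧
    (Coalgebra.counit (R := k)) ∘ₗ f = (Coalgebra.counit (R := k))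

/-- underlying space of each component of the twisted Drinfeld double. -/
abbrev DD (k H : Type*) [CommRing k] [Ring H] [HopfAlgebra k H] :=
  (H →ₗ[k] k) ⊗[k] H

/-- the unit `ε ⊗ 1` of the twisted Drinfeld double. -/
noncomputable def oneDD : DD k H := (Coalgebra.counit (R := k)) ⊗ₜ[k] (1 : H)

/-- `μ` is the multiplication of the `α`-component of the twisted Drinfeld double of `H`. -/
def IsTwistedDoubleMul (αinv Sinv : H →ₗ[k] H)
    (μ : DD k H →ₗ[k] DD k H →ₗ[k] DD k H) : Prop :=
  ∀ (p q : H →ₗ[k] k) (a b : H) (ι : Type) (s : Finset ι) (x y z : ι → H),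
    comul2 (k := k) a = ∑ i ∈ s, (x i ⊗ₜ[k] y i) ⊗ₜ[k] z i →
    μ (p ⊗ₜ[k] a) (q ⊗ₜ[k] b) =
      ∑ i ∈ s, (dualMul p (sandwich (x i) (αinv (Sinv (z i))) q)) ⊗ₜ[k] (y i * b)

/-- the crossing `φ_α(p ⊗ a) = p∘α⁻¹ ⊗ α(a)` of the twisted Drinfeld double. -/
noncomputable def phiDD (f finv : H →ₗ[k] H) : DD k H →ₗ[k] DD k H :=
  TensorProduct.map (LinearMap.lcomp k k finv) f

end Defs

/-! A Hopf automorphism `α` commutes with the antipode, since `α ∘ S` and `S ∘ α` are both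
convolution inverses of `α`; hence it commutes with `S⁻¹`, and `α⁻¹` is again a Hopf
automorphism. Because `α` respects the iterated coproduct, the Sweedler components of `α a` are
the images under `α` of those of `a`, and applying `φ_α` to each summand of the product in
`D(H)_β` yields the corresponding summand of the product in `D(H)_{αβα⁻¹}`: the twist
`β⁻¹S⁻¹` becomes `(αβ⁻¹α⁻¹)S⁻¹` after conjugation. -/

open Coalgebra WithConv

theorem BialgHom.toLinearMap_comp_antipode {R A B : Type*} [CommSemiring R] [Semiring A]
    [Semiring B] [HopfAlgebra R A] [HopfAlgebra R B] (f : A →ₐc[R] B) :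
    (f : A →ₗ[R] B) ∘ₗ antipode R = antipode R ∘ₗ (f : A →ₗ[R] B) := by
  have hl : toConv ((f : A →ₗ[R] B) ∘ₗ antipode R) * toConv (f : A →ₗ[R] B) = 1 := by
    have := LinearMap.algHom_comp_convMul_distrib (f : A →ₐ[R] B) (toConv (antipode R))
      (toConv LinearMap.id)
    have hunit : (f : A →ₐ[R] B).toLinearMap ∘ₗ Algebra.linearMap R A = Algebra.linearMap R B := by
      ext; simp
    rw [LinearMap.antipode_mul_id, LinearMap.convOne_def, ofConv_toConv, ← LinearMap.comp_assoc,
      hunit] at this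
    exact WithConv.ofConv_injective this.symm
  have hr : toConv (f : A →ₗ[R] B) * toConv (antipode R ∘ₗ (f : A →ₗ[R] B)) = 1 := by
    have := LinearMap.convMul_comp_coalgHom_distrib (toConv LinearMap.id) (toConv (antipode R))
      (f : A →ₗc[R] B)
    rw [LinearMap.id_mul_antipode, LinearMap.convOne_def, ofConv_toConv, LinearMap.comp_assoc,
      CoalgHom.counit_comp] at this
    exact WithConv.ofConv_injective this.symm
  exact congrArg ofConv (left_inv_eq_right_inv hl hr)

theorem LinearMap.comp_eq_comp_of_inverse {R M : Type*} [Semiring R] [AddCommMonoid M]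
    [Module R M] {f s t : M →ₗ[R] M} (h : f ∘ₗ s = s ∘ₗ f) (h₁ : t ∘ₗ s = LinearMap.id)
    (h₂ : s ∘ₗ t = LinearMap.id) : f ∘ₗ t = t ∘ₗ f :=
  calc f ∘ₗ t = (t ∘ₗ s) ∘ₗ f ∘ₗ t := by rw [h₁, id_comp]
    _ = t ∘ₗ (f ∘ₗ s) ∘ₗ t := by rw [h]; rfl
    _ = t ∘ₗ f := by rw [comp_assoc, h₂, comp_id]

theorem TensorProduct.exists_sum_tmul_tmul_eq {R M N P : Type*} [CommSemiring R]
    [AddCommMonoid M] [AddCommMonoid N] [AddCommMonoid P] [Module R M] [Module R N] [Module R P]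
    (t : (M ⊗[R] N) ⊗[R] P) : ∃ (ι : Type) (s : Finset ι) (x : ι → M) (y : ι → N) (z : ι → P),
      t = ∑ i ∈ s, (x i ⊗ₜ y i) ⊗ₜ z i := by
  obtain ⟨n, m, z, rfl⟩ := exists_sum_tmul_eq t
  choose len x y hxy using fun j => exists_sum_tmul_eq (m j)
  refine ⟨Σ j : Fin n, Fin (len j), Finset.univ, fun i => x i.1 i.2, fun i => y i.1 i.2,
    fun i => z i.1, ?_⟩
  rw [← Finset.univ_sigma_univ, Finset.sum_sigma]
  simp [hxy, sum_tmul]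

namespace IsHopfAut

variable {k H : Type*} [CommRing k] [Ring H] [HopfAlgebra k H] {f g : H →ₗ[k] H}

theorem map_mul (hf : IsHopfAut f) (x y : H) : f (x * y) = f x * f y := hf.2.1 x y

theorem map_one (hf : IsHopfAut f) : f 1 = 1 := hf.2.2.1

theorem comul_comp (hf : IsHopfAut f) : comul ∘ₗ f = map f f ∘ₗ comul := hf.2.2.2.1

theorem counit_comp (hf : IsHopfAut f) : counit ∘ₗ f = counit := hf.2.2.2.2

def toBialgHom (hf : IsHopfAut f) : H →ₐc[k] H where
  toLinearMap := f
  counit_comp := hf.counit_comp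
  map_comp_comul := hf.comul_comp.symm
  map_one' := hf.map_one
  map_mul' := hf.map_mul

theorem comp_antipode (hf : IsHopfAut f) : f ∘ₗ antipode k = antipode k ∘ₗ f :=
  hf.toBialgHom.toLinearMap_comp_antipode

theorem of_comp_eq_id (hf : IsHopfAut f) (h₁ : g ∘ₗ f = LinearMap.id)
    (h₂ : f ∘ₗ g = LinearMap.id) : IsHopfAut g := by
  have hgf : ∀ x, g (f x) = x := LinearMap.congr_fun h₁
  have hfg : ∀ x, f (g x) = x := LinearMap.congr_fun h₂
  refine ⟨Function.bijective_iff_has_inverse.mpr ⟨f, hfg, hgf⟩, fun x y => ?_, ?_, ?_, ?_⟩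
  · conv_lhs => rw [← hfg x, ← hfg y, ← hf.map_mul, hgf]
  · simpa only [hf.map_one] using hgf 1
  · calc comul ∘ₗ g = (map g g ∘ₗ map f f) ∘ₗ comul ∘ₗ g := by
          rw [← map_comp, h₁, map_id, LinearMap.id_comp]
      _ = map g g ∘ₗ (comul ∘ₗ f) ∘ₗ g := by rw [hf.comul_comp]; rfl
      _ = map g g ∘ₗ comul := by rw [LinearMap.comp_assoc, h₂, LinearMap.comp_id]
  · calc counit ∘ₗ g = (counit ∘ₗ f) ∘ₗ g := by rw [hf.counit_comp]
      _ = counit := by rw [LinearMap.comp_assoc, h₂, LinearMap.comp_id]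

end IsHopfAut

section TwistedDouble

variable {k H : Type*} [CommRing k] [Ring H] [HopfAlgebra k H]

theorem dualMul_comp {f : H →ₗ[k] H} (hf : comul ∘ₗ f = map f f ∘ₗ comul) (p q : H →ₗ[k] k) :
    dualMul (p ∘ₗ f) (q ∘ₗ f) = dualMul p q ∘ₗ f := by
  simp only [dualMul, LinearMap.comp_assoc, hf, map_comp]

theorem sandwich_comp {f : H →ₗ[k] H} (hf : ∀ x y, f (x * y) = f x * f y) (x y : H)
    (q : H →ₗ[k] k) : sandwich x y (q ∘ₗ f) = sandwich (f x) (f y) q ∘ₗ f := by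
  ext h
  simp [sandwich, hf]

theorem comul2_comp {f : H →ₗ[k] H} (hf : comul ∘ₗ f = map f f ∘ₗ comul) :
    comul2 ∘ₗ f = map (map f f) f ∘ₗ comul2 (k := k) := by
  rw [comul2, LinearMap.comp_assoc, hf, ← LinearMap.comp_assoc, LinearMap.rTensor_comp_map, hf,
    ← LinearMap.map_comp_rTensor, LinearMap.comp_assoc]

theorem phiDD_comp (f finv g ginv : H →ₗ[k] H) :
    phiDD f finv ∘ₗ phiDD g ginv = phiDD (f ∘ₗ g) (ginv ∘ₗ finv) := by
  rw [phiDD, phiDD, ← map_comp]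
  rfl

theorem phiDD_id : phiDD (k := k) (H := H) LinearMap.id LinearMap.id = LinearMap.id := by
  rw [phiDD, ← map_id]
  rfl

theorem phiDD_bijective {f finv : H →ₗ[k] H} (h₁ : finv ∘ₗ f = LinearMap.id)
    (h₂ : f ∘ₗ finv = LinearMap.id) : Function.Bijective (phiDD f finv) := by
  refine Function.bijective_iff_has_inverse.mpr ⟨phiDD finv f, fun u => ?_, fun u => ?_⟩
  · rw [← LinearMap.comp_apply, phiDD_comp, h₁, phiDD_id, LinearMap.id_apply]
  · rw [← LinearMap.comp_apply, phiDD_comp, h₂, phiDD_id, LinearMap.id_apply]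

theorem phiDD_oneDD {f finv : H →ₗ[k] H} (hf : f 1 = 1) (hfinv : counit ∘ₗ finv = counit) :
    phiDD f finv oneDD = oneDD := by
  rw [phiDD, oneDD, map_tmul, hf]
  exact congrArg (· ⊗ₜ 1) hfinv

end TwistedDouble

section Crossing

variable {k H : Type*} [CommRing k] [Ring H] [HopfAlgebra k H] {α αinv γ Sinv : H →ₗ[k] H}
  {μ μ' : DD k H →ₗ[k] DD k H →ₗ[k] DD k H}

theorem phiDD_tmul_mul_tmul (hα : IsHopfAut α) (hαinv : IsHopfAut αinv)
    (h₁ : αinv ∘ₗ α = LinearMap.id) (hSinv : α ∘ₗ Sinv = Sinv ∘ₗ α)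
    (hμ : IsTwistedDoubleMul γ Sinv μ) (hμ' : IsTwistedDoubleMul (α ∘ₗ γ ∘ₗ αinv) Sinv μ')
    (p q : H →ₗ[k] k) (a b : H) :
    phiDD α αinv (μ (p ⊗ₜ a) (q ⊗ₜ b)) =
      μ' (phiDD α αinv (p ⊗ₜ a)) (phiDD α αinv (q ⊗ₜ b)) := by
  have hgf : ∀ x, αinv (α x) = x := LinearMap.congr_fun h₁
  have hSinv' : ∀ x, αinv (Sinv (α x)) = Sinv x := fun x => by
    rw [← LinearMap.comp_apply Sinv, ← hSinv, LinearMap.comp_apply, hgf]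
  obtain ⟨ι, s, x, y, z, hrep⟩ := exists_sum_tmul_tmul_eq (comul2 (k := k) a)
  have hrep' : comul2 (k := k) (α a) = ∑ i ∈ s, (α (x i) ⊗ₜ α (y i)) ⊗ₜ α (z i) := by
    rw [← LinearMap.comp_apply, comul2_comp hα.comul_comp, LinearMap.comp_apply, hrep, map_sum]
    simp only [map_tmul]
  rw [hμ p q a b ι s x y z hrep, phiDD, map_tmul, map_tmul, hμ' _ _ _ _ ι s _ _ _ hrep', map_sum]
  refine Finset.sum_congr rfl fun i _ => ?_
  simp only [map_tmul, LinearMap.lcomp_apply', LinearMap.comp_apply, hα.map_mul, hSinv',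
    sandwich_comp hαinv.map_mul, hgf, dualMul_comp hαinv.comul_comp]

theorem phiDD_twistedDoubleMul (hα : IsHopfAut α) (hαinv : IsHopfAut αinv)
    (h₁ : αinv ∘ₗ α = LinearMap.id) (hSinv : α ∘ₗ Sinv = Sinv ∘ₗ α)
    (hμ : IsTwistedDoubleMul γ Sinv μ) (hμ' : IsTwistedDoubleMul (α ∘ₗ γ ∘ₗ αinv) Sinv μ')
    (u v : DD k H) : phiDD α αinv (μ u v) = μ' (phiDD α αinv u) (phiDD α αinv v) := by
  suffices μ.compr₂ (phiDD α αinv) = μ'.compl₁₂ (phiDD α αinv) (phiDD α αinv) from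
    LinearMap.congr_fun₂ this u v
  exact ext' fun p a => ext' fun q b => phiDD_tmul_mul_tmul hα hαinv h₁ hSinv hμ hμ' p q a b

end Crossing

theorem twistedDoubleCrossing_general
    (k H : Type*) [Field k] [Ring H] [HopfAlgebra k H]
    (α αinv β βinv : H →ₗ[k] H) (hα : IsHopfAut α)
    (hαinv₁ : αinv ∘ₗ α = LinearMap.id) (hαinv₂ : α ∘ₗ αinv = LinearMap.id)
    (Sinv : H →ₗ[k] H)
    (hSinv₁ : Sinv ∘ₗ HopfAlgebra.antipode (R := k) = LinearMap.id)
    (hSinv₂ : HopfAlgebra.antipode (R := k) ∘ₗ Sinv = LinearMap.id)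
    -- the twisted product on `D(H)_β` and on `D(H)_{αβα⁻¹}` :
    (μβ μc : DD k H →ₗ[k] DD k H →ₗ[k] DD k H)
    (hμβ : IsTwistedDoubleMul βinv Sinv μβ)
    (hμc : IsTwistedDoubleMul (α ∘ₗ βinv ∘ₗ αinv) Sinv μc) :
    -- `φ_α` is an algebra isomorphism `D(H)_β → D(H)_{αβα⁻¹}`:
    (Function.Bijective (phiDD α αinv) ∧
      (∀ u v : DD k H, phiDD α αinv (μβ u v) = μc (phiDD α αinv u) (phiDD α αinv v)) ∧
      phiDD α αinv (oneDD (k := k) (H := H)) = oneDD) ∧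
    -- `φ_α ∘ φ_β = φ_{αβ}` :
    (phiDD (k := k) (H := H) α αinv) ∘ₗ (phiDD β βinv) = phiDD (α ∘ₗ β) (βinv ∘ₗ αinv) := by
  have hαinv : IsHopfAut αinv := hα.of_comp_eq_id hαinv₁ hαinv₂
  have hSinv : α ∘ₗ Sinv = Sinv ∘ₗ α :=
    LinearMap.comp_eq_comp_of_inverse hα.comp_antipode hSinv₁ hSinv₂
  exact ⟨⟨phiDD_bijective hαinv₁ hαinv₂,
    phiDD_twistedDoubleMul hα hαinv hαinv₁ hSinv hμβ hμc,
    phiDD_oneDD hα.map_one hαinv.counit_comp⟩, phiDD_comp α αinv β βinv⟩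

/-- The crossings `φ_α : D(H)_β → D(H)_{αβα⁻¹}` are algebra isomorphisms
and `φ_α ∘ φ_β = φ_{αβ}` for all Hopf automorphisms `α, β` of `H`. -/
theorem twistedDoubleCrossing
    (k H : Type*) [Field k] [Ring H] [HopfAlgebra k H] [FiniteDimensional k H]
    (α αinv β βinv : H →ₗ[k] H) (hα : IsHopfAut α) (hβ : IsHopfAut β)
    (hαinv₁ : αinv ∘ₗ α = LinearMap.id) (hαinv₂ : α ∘ₗ αinv = LinearMap.id)
    (hβinv₁ : βinv ∘ₗ β = LinearMap.id) (hβinv₂ : β ∘ₗ βinv = LinearMap.id)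
    (Sinv : H →ₗ[k] H)
    (hSinv₁ : Sinv ∘ₗ HopfAlgebra.antipode (R := k) = LinearMap.id)
    (hSinv₂ : HopfAlgebra.antipode (R := k) ∘ₗ Sinv = LinearMap.id)
    -- the twisted product on `D(H)_β` and on `D(H)_{αβα⁻¹}` :
    (μβ μc : DD k H →ₗ[k] DD k H →ₗ[k] DD k H)
    (hμβ : IsTwistedDoubleMul βinv Sinv μβ)
    (hμc : IsTwistedDoubleMul (α ∘ₗ βinv ∘ₗ αinv) Sinv μc) :
    -- `φ_α` is an algebra isomorphism `D(H)_β → D(H)_{αβα⁻¹}`: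
    (Function.Bijective (phiDD α αinv) ∧
      (∀ u v : DD k H, phiDD α αinv (μβ u v) = μc (phiDD α αinv u) (phiDD α αinv v)) ∧
      phiDD α αinv (oneDD (k := k) (H := H)) = oneDD) ∧
    -- `φ_α ∘ φ_β = φ_{αβ}` :
    (phiDD (k := k) (H := H) α αinv) ∘ₗ (phiDD β βinv) = phiDD (α ∘ₗ β) (βinv ∘ₗ αinv) :=
  twistedDoubleCrossing_general k H α αinv β βinv hα hαinv₁ hαinv₂ Sinv hSinv₁ hSinv₂ μβ μc hμβ hμc
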